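/- For every integer m ≥ 3, the complete coloring number of the Modified Roichman Rectangle R̄_m satisfies 8m−7 ≤ Γ(R̄_m) ≤ 8m−6. -/

import Mathlib

/-!
Write `q = m - 1`. The upper bound is edge counting: a complete `k`-coloring needs an edge for each
of the `k.choose 2` pairs of colors, and the `(16q+1) × (q+1)` grid has fewer than
`(8q+3).choose 2` edges.

For the lower bound color the grid by `ZMod (8q+1)`. Column `j` is a zigzag whose rows `2t`,
`2t+1` carry `offset j + t` and `offset j + t + jump j`, so its edges realize the differences
`jump j` and `jump j - 1`, while the edges between columns `j` and `j+1` realize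
`shift j = offset (j+1) - offset j` and `shift j + jump (j+1) - jump j`. The jumps and shifts are
chosen so that these differences exhaust `1, …, 4q`, i.e. all pairs of colors. Each zigzag is one
row too short to realize every pair with its differences; the missing pairs are stacked explicitly
in the upper half of the last column.
-/

/-- The rectangular grid graph `R_{m×n}`: vertices are pairs `(i,j)` with
`i < m`, `j < n`, adjacent iff they differ by exactly one in exactly one
coordinate. -/
def gridGraph (m n : ℕ) : SimpleGraph (Fin m × Fin n) where
  Adj p q := (p.1 = q.1 ∧ ((p.2 : ℕ) + 1 = q.2 ∨ (q.2 : ℕ) + 1 = p.2)) ∨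
             (p.2 = q.2 ∧ ((p.1 : ℕ) + 1 = q.1 ∨ (q.1 : ℕ) + 1 = p.1))
  symm := by
    constructor
    rintro p q (⟨h, h'⟩ | ⟨h, h'⟩)
    · exact Or.inl ⟨h.symm, h'.symm⟩
    · exact Or.inr ⟨h.symm, h'.symm⟩
  loopless := by
    constructor
    rintro p (⟨_, h | h⟩ | ⟨_, h | h⟩) <;> omega

/-- `c` is a `k`-complete coloring of `G`: every pair of distinct colors appears
on some edge. -/
def IsCompleteColoring {V : Type*} (G : SimpleGraph V) (k : ℕ) (c : V → Fin k) : Prop :=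
  ∀ i j : Fin k, i ≠ j → ∃ u v, G.Adj u v ∧ c u = i ∧ c v = j

/-- `c` is a `k`-complete proper coloring of `G`. -/
def IsCompleteProperColoring {V : Type*} (G : SimpleGraph V) (k : ℕ) (c : V → Fin k) : Prop :=
  IsCompleteColoring G k c ∧ ∀ u v, G.Adj u v → c u ≠ c v

/-- The complete coloring number `Γ(G)`: the maximum `k` admitting a
`k`-complete coloring. -/
noncomputable def completeColoringNumber {V : Type*} (G : SimpleGraph V) : ℕ :=
  sSup {k | ∃ c : V → Fin k, IsCompleteColoring G k c}

/-- The achromatic number `Ψ(G)`: the maximum `k` admitting a `k`-complete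
proper coloring. -/
noncomputable def achromaticNumber {V : Type*} (G : SimpleGraph V) : ℕ :=
  sSup {k | ∃ c : V → Fin k, IsCompleteProperColoring G k c}

open Finset SimpleGraph

namespace SimpleGraph

variable {V α : Type*} (G : SimpleGraph V)

def RealizesPair (c : V → α) (a b : α) : Prop :=
  ∃ u v, G.Adj u v ∧ c u = a ∧ c v = b

variable {G}

theorem RealizesPair.symm {c : V → α} {a b : α} (h : G.RealizesPair c a b) :
    G.RealizesPair c b a :=
  let ⟨u, v, huv, hu, hv⟩ := h
  ⟨v, u, huv.symm, hv, hu⟩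

end SimpleGraph

section CompleteColoring

variable {V α : Type*} {G : SimpleGraph V}

theorem isCompleteColoring_equiv_comp {k : ℕ} {c : V → α} (e : α ≃ Fin k)
    (h : ∀ a b, a ≠ b → G.RealizesPair c a b) : IsCompleteColoring G k (e ∘ c) := by
  intro i j hij
  obtain ⟨u, v, huv, hu, hv⟩ := h (e.symm i) (e.symm j) (e.symm.injective.ne hij)
  exact ⟨u, v, huv, by simp [hu], by simp [hv]⟩

theorem IsCompleteColoring.choose_two_le_card_edgeFinset [Fintype V] [DecidableEq V]
    [DecidableRel G.Adj] {k : ℕ} {c : V → Fin k} (hc : IsCompleteColoring G k c) :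
    k.choose 2 ≤ #G.edgeFinset := by
  have hsub : (⊤ : SimpleGraph (Fin k)).edgeFinset ⊆ G.edgeFinset.image (Sym2.map c) := by
    intro e he
    induction e using Sym2.ind with
    | h i j =>
      obtain ⟨u, v, huv, rfl, rfl⟩ := hc i j (by simpa using he)
      exact mem_image.2 ⟨s(u, v), by simpa using huv, rfl⟩
  calc k.choose 2 = #(⊤ : SimpleGraph (Fin k)).edgeFinset := by
        rw [card_edgeFinset_top_eq_card_choose_two, Fintype.card_fin]
    _ ≤ #G.edgeFinset := (card_le_card hsub).trans card_image_le

theorem le_completeColoringNumber {B k : ℕ} {c : V → Fin k}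
    (hB : ∀ k (c : V → Fin k), IsCompleteColoring G k c → k ≤ B) (hc : IsCompleteColoring G k c) :
    k ≤ completeColoringNumber G :=
  le_csSup ⟨B, fun k ⟨c, hc⟩ => hB k c hc⟩ ⟨c, hc⟩

theorem completeColoringNumber_le {B : ℕ}
    (hB : ∀ k (c : V → Fin k), IsCompleteColoring G k c → k ≤ B) :
    completeColoringNumber G ≤ B :=
  csSup_le ⟨1, fun _ => 0, fun i j hij => absurd (Subsingleton.elim i j) hij⟩
    fun k ⟨c, hc⟩ => hB k c hc

end CompleteColoring

namespace ZMod

theorem exists_le_add_natCast {n : ℕ} (x b : ZMod (n + 1)) : ∃ u ≤ n, x = b + u :=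
  ⟨(x - b).val, Nat.lt_succ_iff.mp (ZMod.val_lt _), by rw [ZMod.natCast_zmod_val]; ring⟩

theorem exists_lt_add_natCast_or_eq_sub_one {n : ℕ} (x b : ZMod (n + 1)) :
    (∃ u < n, x = b + u) ∨ x = b - 1 := by
  obtain ⟨u, hu, rfl⟩ := exists_le_add_natCast x b
  rcases hu.lt_or_eq with hu | hu
  · exact .inl ⟨u, hu, rfl⟩
  · refine .inr ?_
    subst hu
    linear_combination (norm := (push_cast; ring)) ZMod.natCast_self (u + 1)

theorem forall_ne_of_forall_add_natCast {n h : ℕ} (hn : n = 2 * h + 1)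
    {R : ZMod n → ZMod n → Prop} (symm : ∀ a b, R a b → R b a)
    (hR : ∀ x (d : ℕ), 1 ≤ d → d ≤ h → R x (x + d)) (a b : ZMod n) (hab : a ≠ b) : R a b := by
  subst hn
  obtain ⟨d, hd, rfl⟩ := exists_le_add_natCast b a
  have hd0 : d ≠ 0 := by rintro rfl; simp at hab
  by_cases hdh : d ≤ h
  · exact hR a d (by omega) hdh
  · refine symm _ _ ?_
    convert hR (a + d) (2 * h + 1 - d) (by omega) (by omega) using 1
    rw [Nat.cast_sub (by omega)]
    linear_combination (-1 : ZMod (2 * h + 1)) * ZMod.natCast_self (2 * h + 1)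

end ZMod

instance (m n : ℕ) : DecidableRel (gridGraph m n).Adj :=
  fun _ _ => inferInstanceAs (Decidable (_ ∨ _))

theorem card_edgeFinset_gridGraph_le (a b : ℕ) :
    #(gridGraph (a + 1) (b + 1)).edgeFinset ≤ (a + 1) * b + a * (b + 1) := by
  let edge : Fin (a + 1) × Fin b ⊕ Fin a × Fin (b + 1) → Sym2 (Fin (a + 1) × Fin (b + 1))
    | .inl (i, j) => s((i, j.castSucc), (i, j.succ))
    | .inr (i, j) => s((i.castSucc, j), (i.succ, j))
  have hsub : (gridGraph (a + 1) (b + 1)).edgeFinset ⊆ univ.image edge := by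
    intro e he
    induction e using Sym2.ind with
    | h u v =>
      obtain ⟨i, j⟩ := u
      obtain ⟨i', j'⟩ := v
      rw [SimpleGraph.mem_edgeFinset, mem_edgeSet] at he
      dsimp only [gridGraph] at he
      simp only [mem_image, mem_univ, true_and]
      rcases he with ⟨rfl, hj | hj⟩ | ⟨rfl, hi | hi⟩
      · refine ⟨.inl (i, ⟨j, by omega⟩), ?_⟩
        simp [edge, hj]
      · refine ⟨.inl (i, ⟨j', by omega⟩), ?_⟩
        simp [edge, hj, Sym2.eq_swap]
      · refine ⟨.inr (⟨i, by omega⟩, j), ?_⟩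
        simp [edge, hi]
      · refine ⟨.inr (⟨i', by omega⟩, j), ?_⟩
        simp [edge, hi, Sym2.eq_swap]
  simpa using (card_le_card hsub).trans card_image_le

theorem le_of_isCompleteColoring_gridGraph (q k : ℕ) (c : Fin (16 * q + 1) × Fin (q + 1) → Fin k)
    (hc : IsCompleteColoring (gridGraph (16 * q + 1) (q + 1)) k c) : k ≤ 8 * q + 2 := by
  by_contra! hk
  have h := (Nat.choose_le_choose 2 hk).trans
    (hc.choose_two_le_card_edgeFinset.trans (card_edgeFinset_gridGraph_le (16 * q) q))
  rw [Nat.choose_two_right] at h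
  have : (8 * q + 3) * (8 * q + 3 - 1) = 2 * ((8 * q + 3) * (4 * q + 1)) := by
    rw [show 8 * q + 3 - 1 = 2 * (4 * q + 1) by omega]; ring
  rw [this, Nat.mul_div_cancel_left _ two_pos] at h
  nlinarith

namespace RoichmanColoring

variable (q : ℕ)

def jump (j : ℕ) : ℕ :=
  if j + 1 = q then 4 * q - 2 else if j = q then 4 * q else 4 * j + 3 - q % 2

def shift (j : ℕ) : ℕ :=
  if j + 1 = q then 4 * q else if j % 2 = 0 then 4 * j + 1 + 2 * (q % 2) else 4 * j

def offset (j : ℕ) : ZMod (8 * q + 1) :=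
  ∑ i ∈ range j, (shift q i : ZMod (8 * q + 1))

/-- The pairs the zigzags miss: for column `j` those at the bases `offset j - 1` and `offset j`,
for the gap after column `j` the one at base `offset j + jump j - 1`, and three more at the seam
of the last two columns, since the last column is a zigzag only up to row `8q`. -/
def patchPairs : List (ZMod (8 * q + 1) × ZMod (8 * q + 1)) :=
  (List.range q).flatMap (fun j =>
      [(offset q j - 1, offset q j - 1 + jump q j), (offset q j, offset q j + (jump q j - 1))]) ++
    (List.range (q - 1)).map (fun j =>
      (offset q j + jump q j - 1,
        offset q j + jump q j - 1 + (shift q j + jump q (j + 1) - jump q j))) ++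
    [(offset q (q - 1) - 1, offset q (q - 1) - 1 + 4 * q),
      (offset q (q - 1) + 4 * q - 1, offset q (q - 1) + 4 * q - 1 + (4 * q - 1)),
      (offset q (q - 1) + 4 * q, offset q (q - 1) + 4 * q + (4 * q - 1))]

/-- `r` is the row and `j` the column; rows `8q + 2i + 1`, `8q + 2i + 2` of the last column
carry the `i`-th patch pair. -/
def gridColor (r j : ℕ) : ZMod (8 * q + 1) :=
  if j = q ∧ 8 * q < r then
    let p := (patchPairs q).getD ((r - (8 * q + 1)) / 2) (0, 0)
    if (r - (8 * q + 1)) % 2 = 0 then p.1 else p.2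
  else offset q j + (r / 2 : ℕ) + if r % 2 = 1 then (jump q j : ZMod (8 * q + 1)) else 0

abbrev Realizes (a b : ZMod (8 * q + 1)) : Prop :=
  (gridGraph (16 * q + 1) (q + 1)).RealizesPair (fun v => gridColor q v.1 v.2) a b

variable {q}

theorem eight_mul_add_one_eq_zero : (8 * q + 1 : ZMod (8 * q + 1)) = 0 := by
  exact_mod_cast ZMod.natCast_self (8 * q + 1)

theorem offset_succ (j : ℕ) : offset q (j + 1) = offset q j + shift q j := by
  simp [offset, sum_range_succ]

theorem offset_self (hq : 1 ≤ q) : offset q q = offset q (q - 1) + 4 * q := by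
  obtain ⟨p, rfl⟩ : ∃ p, q = p + 1 := ⟨q - 1, by omega⟩
  simp [offset_succ, shift]

theorem jump_self : (jump q q : ZMod (8 * q + 1)) = 4 * q := by
  simp [jump]

theorem jump_pred (hq : 1 ≤ q) : (jump q (q - 1) : ZMod (8 * q + 1)) = 4 * q - 2 := by
  rw [jump, if_pos (by omega), Nat.cast_sub (by omega)]
  push_cast; ring

theorem gridColor_even {j t : ℕ} (h : j ≠ q ∨ 2 * t ≤ 8 * q) :
    gridColor q (2 * t) j = offset q j + t := by
  rw [gridColor, if_neg (by omega)]
  simp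

theorem gridColor_odd {j t : ℕ} (h : j ≠ q ∨ 2 * t + 1 ≤ 8 * q) :
    gridColor q (2 * t + 1) j = offset q j + t + jump q j := by
  rw [gridColor, if_neg (by omega), if_pos (by omega), show (2 * t + 1) / 2 = t by omega]

theorem gridColor_patch_fst (i : ℕ) :
    gridColor q (8 * q + 2 * i + 1) q = ((patchPairs q).getD i (0, 0)).1 := by
  rw [gridColor, if_pos ⟨rfl, by omega⟩, show 8 * q + 2 * i + 1 - (8 * q + 1) = 2 * i by omega]
  simp

theorem gridColor_patch_snd (i : ℕ) :
    gridColor q (8 * q + 2 * i + 1 + 1) q = ((patchPairs q).getD i (0, 0)).2 := by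
  rw [gridColor, if_pos ⟨rfl, by omega⟩,
    show 8 * q + 2 * i + 1 + 1 - (8 * q + 1) = 2 * i + 1 by omega]
  simp [show (2 * i + 1) / 2 = i by omega]

theorem realizes_vertical {r j : ℕ} (hr : r < 16 * q) (hj : j ≤ q) :
    Realizes q (gridColor q r j) (gridColor q (r + 1) j) :=
  ⟨(⟨r, by omega⟩, ⟨j, by omega⟩), (⟨r + 1, by omega⟩, ⟨j, by omega⟩),
    .inr ⟨rfl, .inl rfl⟩, rfl, rfl⟩

theorem realizes_horizontal {r j : ℕ} (hr : r ≤ 16 * q) (hj : j < q) :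
    Realizes q (gridColor q r j) (gridColor q r (j + 1)) :=
  ⟨(⟨r, by omega⟩, ⟨j, by omega⟩), (⟨r, by omega⟩, ⟨j + 1, by omega⟩),
    .inl ⟨rfl, .inl rfl⟩, rfl, rfl⟩

theorem length_patchPairs (hq : 1 ≤ q) : (patchPairs q).length = 3 * q + 2 := by
  simp only [patchPairs, List.length_append, List.length_flatMap, List.length_cons,
    List.length_nil, List.map_const', List.length_range, List.sum_replicate, smul_eq_mul,
    List.length_map]
  omega

theorem column_mem_patchPairs {j : ℕ} (hj : j < q) :
    (offset q j - 1, offset q j - 1 + jump q j) ∈ patchPairs q ∧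
      (offset q j, offset q j + (jump q j - 1)) ∈ patchPairs q := by
  simp only [patchPairs, List.mem_append, List.mem_flatMap, List.mem_range]
  exact ⟨.inl (.inl ⟨j, hj, by simp⟩), .inl (.inl ⟨j, hj, by simp⟩)⟩

theorem gap_mem_patchPairs {j : ℕ} (hj : j + 1 < q) :
    (offset q j + jump q j - 1,
      offset q j + jump q j - 1 + (shift q j + jump q (j + 1) - jump q j)) ∈ patchPairs q := by
  simp only [patchPairs, List.mem_append]
  exact .inl (.inr (List.mem_map.2 ⟨j, List.mem_range.2 (by omega), rfl⟩))

theorem seam_mem_patchPairs :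
    (offset q (q - 1) - 1, offset q (q - 1) - 1 + 4 * q) ∈ patchPairs q ∧
      (offset q (q - 1) + 4 * q - 1, offset q (q - 1) + 4 * q - 1 + (4 * q - 1)) ∈ patchPairs q ∧
      (offset q (q - 1) + 4 * q, offset q (q - 1) + 4 * q + (4 * q - 1)) ∈ patchPairs q := by
  simp only [patchPairs, List.mem_append]
  exact ⟨.inr (by simp), .inr (by simp), .inr (by simp)⟩

theorem realizes_of_mem_patchPairs (hq : 2 ≤ q) {a b : ZMod (8 * q + 1)}
    (hp : (a, b) ∈ patchPairs q) : Realizes q a b := by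
  obtain ⟨i, hi, hab⟩ := List.mem_iff_getElem.mp hp
  rw [length_patchPairs (by omega)] at hi
  have h := realizes_vertical (r := 8 * q + 2 * i + 1) (j := q) (by omega) le_rfl
  rwa [gridColor_patch_fst, gridColor_patch_snd, List.getD_eq_getElem _ _ (by omega), hab] at h

variable (q)

theorem realizes_column_even {j : ℕ} (t : ℕ)
    (hjt : j < q ∧ t < 8 * q ∨ j = q ∧ 2 * t + 1 ≤ 8 * q) :
    Realizes q (offset q j + t) (offset q j + t + jump q j) := by
  have h := realizes_vertical (q := q) (r := 2 * t) (j := j) (by omega) (by omega)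
  rwa [gridColor_even (by omega), gridColor_odd (by omega)] at h

theorem realizes_column_odd {j : ℕ} (t : ℕ)
    (hjt : j < q ∧ t < 8 * q ∨ j = q ∧ 2 * t + 2 ≤ 8 * q) :
    Realizes q (offset q j + t + jump q j) (offset q j + (t + 1 : ℕ)) := by
  have h := realizes_vertical (q := q) (r := 2 * t + 1) (j := j) (by omega) (by omega)
  rwa [gridColor_odd (by omega), show 2 * t + 1 + 1 = 2 * (t + 1) by ring,
    gridColor_even (by omega)] at h

theorem realizes_row_even {j : ℕ} (t : ℕ)
    (hjt : j + 1 < q ∧ t ≤ 8 * q ∨ j + 1 = q ∧ 2 * t ≤ 8 * q) :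
    Realizes q (offset q j + t) (offset q (j + 1) + t) := by
  have h := realizes_horizontal (q := q) (r := 2 * t) (j := j) (by omega) (by omega)
  rwa [gridColor_even (by omega), gridColor_even (by omega)] at h

theorem realizes_row_odd {j : ℕ} (t : ℕ)
    (hjt : j + 1 < q ∧ t < 8 * q ∨ j + 1 = q ∧ 2 * t + 1 ≤ 8 * q) :
    Realizes q (offset q j + t + jump q j) (offset q (j + 1) + t + jump q (j + 1)) := by
  have h := realizes_horizontal (q := q) (r := 2 * t + 1) (j := j) (by omega) (by omega)
  rwa [gridColor_odd (by omega), gridColor_odd (by omega)] at h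

variable {q}

open ZMod

theorem realizes_add_jump (hq : 2 ≤ q) {j : ℕ} (hj : j < q) (x : ZMod (8 * q + 1)) :
    Realizes q x (x + jump q j) := by
  rcases exists_lt_add_natCast_or_eq_sub_one x (offset q j) with ⟨t, ht, rfl⟩ | rfl
  · exact realizes_column_even q t (.inl ⟨hj, ht⟩)
  · exact realizes_of_mem_patchPairs hq (column_mem_patchPairs hj).1

theorem realizes_add_jump_sub_one (hq : 2 ≤ q) {j : ℕ} (hj : j < q) (x : ZMod (8 * q + 1)) :
    Realizes q x (x + (jump q j - 1)) := by
  rcases exists_lt_add_natCast_or_eq_sub_one x (offset q j + 1) with ⟨t, ht, rfl⟩ | rfl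
  · convert (realizes_column_odd q t (.inl ⟨hj, ht⟩)).symm using 1 <;> push_cast <;> ring
  · rw [add_sub_cancel_right]
    exact realizes_of_mem_patchPairs hq (column_mem_patchPairs hj).2

theorem realizes_add_shift {j : ℕ} (hj : j + 1 < q) (x : ZMod (8 * q + 1)) :
    Realizes q x (x + shift q j) := by
  obtain ⟨t, ht, rfl⟩ := exists_le_add_natCast x (offset q j)
  convert realizes_row_even q t (.inl ⟨hj, ht⟩) using 1
  rw [offset_succ]; ring

theorem realizes_add_shift_add_jump_sub_jump (hq : 2 ≤ q) {j : ℕ} (hj : j + 1 < q)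
    (x : ZMod (8 * q + 1)) :
    Realizes q x (x + (shift q j + jump q (j + 1) - jump q j)) := by
  rcases exists_lt_add_natCast_or_eq_sub_one x (offset q j + jump q j) with ⟨t, ht, rfl⟩ | rfl
  · have h := realizes_row_odd q t (.inl ⟨hj, ht⟩)
    rw [offset_succ] at h
    convert h using 1 <;> ring
  · exact realizes_of_mem_patchPairs hq (gap_mem_patchPairs hj)

theorem realizes_add_four_mul (hq : 2 ≤ q) (x : ZMod (8 * q + 1)) :
    Realizes q x (x + 4 * q) := by
  rcases exists_lt_add_natCast_or_eq_sub_one x (offset q (q - 1)) with ⟨u, hu, rfl⟩ | rfl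
  · by_cases hu4 : u ≤ 4 * q
    · have h := realizes_row_even q (j := q - 1) u (.inr ⟨by omega, by omega⟩)
      rw [Nat.sub_add_cancel (by omega), offset_self (by omega)] at h
      convert h using 1; ring
    · obtain ⟨t, rfl⟩ : ∃ t, u = 4 * q + t := ⟨u - 4 * q, by omega⟩
      have h := realizes_column_even q (j := q) t (.inr ⟨rfl, by omega⟩)
      rw [offset_self (by omega), jump_self] at h
      convert h using 1 <;> push_cast <;> ring
  · exact realizes_of_mem_patchPairs hq seam_mem_patchPairs.1

theorem realizes_add_four_mul_sub_one (hq : 2 ≤ q) (x : ZMod (8 * q + 1)) :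
    Realizes q x (x + (4 * q - 1)) := by
  obtain ⟨u, hu, rfl⟩ := exists_le_add_natCast x (offset q (q - 1) - 1)
  rcases lt_or_ge u (4 * q) with hu4 | hu4
  · have h := realizes_row_odd q (j := q - 1) u (.inr ⟨by omega, by omega⟩)
    rw [Nat.sub_add_cancel (by omega), offset_self (by omega), jump_self,
      jump_pred (by omega)] at h
    convert h.symm using 1
    · linear_combination (-1 : ZMod (8 * q + 1)) * eight_mul_add_one_eq_zero (q := q)
    · ring
  obtain rfl | rfl | hu4 : u = 4 * q ∨ u = 4 * q + 1 ∨ 4 * q + 2 ≤ u := by omega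
  · convert realizes_of_mem_patchPairs hq seam_mem_patchPairs.2.1 using 1 <;> push_cast <;> ring
  · convert realizes_of_mem_patchPairs hq seam_mem_patchPairs.2.2 using 1 <;> push_cast <;> ring
  · obtain ⟨t, rfl⟩ : ∃ t, u = 4 * q + 2 + t := ⟨u - (4 * q + 2), by omega⟩
    have h := realizes_column_odd q (j := q) t (.inr ⟨rfl, by omega⟩)
    rw [offset_self (by omega), jump_self] at h
    convert h.symm using 1 <;> push_cast <;> ring

-- Away from the last columns `jump j ≡ 3 - q % 2 (mod 4)`, `jump j - 1` has the neighbouring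
-- residue, and `shift j`, `shift j + 4` cover the other two residues in blocks of eight.
theorem exists_jump_or_shift (hq : 2 ≤ q) {d : ℕ} (hd : 1 ≤ d) (hd' : d ≤ 4 * q) :
    (∃ j < q, d = jump q j ∨ d + 1 = jump q j) ∨
      (∃ j, j + 1 < q ∧ (d = shift q j ∨ d + jump q j = shift q j + jump q (j + 1))) ∨
      d + 1 = 4 * q ∨ d = 4 * q := by
  obtain h | h | h | h | h | h : d = 4 * q ∨ d + 1 = 4 * q ∨ d + 2 = 4 * q ∨ d + 3 = 4 * q ∨
      d + 4 = 4 * q ∨ d + 5 ≤ 4 * q := by omega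
  · exact .inr (.inr (.inr h))
  · exact .inr (.inr (.inl h))
  · exact .inl ⟨q - 1, by omega, .inl (by rw [jump, if_pos (by omega)]; omega)⟩
  · exact .inl ⟨q - 1, by omega, .inr (by rw [jump, if_pos (by omega)]; omega)⟩
  · exact .inr (.inl ⟨q - 2, by omega, .inr (by unfold jump shift; split_ifs <;> omega)⟩)
  by_cases hc : d % 4 = 3 - q % 2 ∨ d % 4 = 2 - q % 2
  · exact .inl ⟨d / 4, by omega, by unfold jump; split_ifs <;> omega⟩
  by_cases hs : d % 8 = 1 + 2 * (q % 2) ∨ d % 8 = 4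
  · exact .inr (.inl ⟨d / 4, by omega, .inl (by unfold shift; split_ifs <;> omega)⟩)
  · exact .inr (.inl ⟨d / 4 - 1, by omega, .inr (by unfold jump shift; split_ifs <;> omega)⟩)

theorem realizes_add_natCast (hq : 2 ≤ q) (x : ZMod (8 * q + 1)) {d : ℕ} (hd : 1 ≤ d)
    (hd' : d ≤ 4 * q) : Realizes q x (x + d) := by
  rcases exists_jump_or_shift hq hd hd' with ⟨j, hj, h | h⟩ | ⟨j, hj, h | h⟩ | h | h
  · rw [h]; exact realizes_add_jump hq hj x
  · convert realizes_add_jump_sub_one hq hj x using 2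
    rw [← h]; push_cast; ring
  · rw [h]; exact realizes_add_shift hj x
  · convert realizes_add_shift_add_jump_sub_jump hq hj x using 2
    have h' := congrArg (Nat.cast : ℕ → ZMod (8 * q + 1)) h
    push_cast at h'
    linear_combination h'
  · convert realizes_add_four_mul_sub_one hq x using 2
    have h' := congrArg (Nat.cast : ℕ → ZMod (8 * q + 1)) h
    push_cast at h'
    linear_combination h'
  · rw [h]; push_cast; exact realizes_add_four_mul hq x

theorem exists_isCompleteColoring_gridGraph (hq : 2 ≤ q) :
    ∃ c, IsCompleteColoring (gridGraph (16 * q + 1) (q + 1)) (8 * q + 1) c :=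
  ⟨_, isCompleteColoring_equiv_comp (ZMod.finEquiv (8 * q + 1)).symm.toEquiv
    (ZMod.forall_ne_of_forall_add_natCast (by ring) (fun _ _ h => h.symm)
      (fun x _ hd hd' => realizes_add_natCast hq x hd hd'))⟩

end RoichmanColoring

/-- For `m ≥ 3` and `N̄ = 16(m−1)+1`, the Modified Roichman Rectangle (the
`N̄×m` grid) satisfies `8m − 7 ≤ Γ(R̄_m) ≤ 8m − 6`. -/
theorem gamma_modified_roichman_rectangle (m : ℕ) (hm : 3 ≤ m) (N : ℕ)
    (hN : N = 16 * (m - 1) + 1) :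
    8 * m - 7 ≤ completeColoringNumber (gridGraph N m) ∧
    completeColoringNumber (gridGraph N m) ≤ 8 * m - 6 := by
  obtain ⟨q, rfl⟩ : ∃ q, m = q + 1 := ⟨m - 1, by omega⟩
  obtain rfl : N = 16 * q + 1 := by omega
  obtain ⟨c, hc⟩ := RoichmanColoring.exists_isCompleteColoring_gridGraph (q := q) (by omega)
  have hbound := le_of_isCompleteColoring_gridGraph q
  exact ⟨le_trans (by omega) (le_completeColoringNumber hbound hc),
    (completeColoringNumber_le hbound).trans (by omega)⟩
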